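/- Let H be a separable Hilbert space with self-adjoint operator Δ ≥ 0 with discrete spectrum and lowest eigenvalue λ₀, heat semigroup S_t, and μ_t the Gaussian measure with Fourier transform ψ ↦ exp(-½‖S_tψ‖²). Let A_t(ψ) = e^{tλ₀}ψ and μ̃_t = (A_t)_*μ_t. Then the Fourier transforms of μ̃_t converge pointwise, as t → ∞, to ψ ↦ exp(-½‖π₀ψ‖²), where π₀ is the orthogonal projection onto the λ₀-eigenspace; i.e., μ̃_t converges weakly to the standard Gaussian measure on the eigenspace Eig₀ pushed forward to H. -/

import Mathlib

open MeasureTheory Complex Filter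

/-! A real dilation `x ↦ c • x` of a measure moves onto the argument of its Fourier transform,
so the Fourier transform of `μ̃_t` at `ψ` is `exp(-½‖e^{tλ₀} S_t ψ‖²)`; this converges to
`exp(-½‖π₀ψ‖²)` by the strong convergence `e^{tλ₀} S_t → π₀` and continuity. -/

section FourierTransform

variable {H : Type*} [NormedAddCommGroup H] [InnerProductSpace ℂ H]

lemma continuous_exp_I_mul_re_inner (ψ : H) :
    Continuous fun φ : H => Complex.exp (Complex.I * ((inner ℂ ψ φ : ℂ).re : ℂ)) := by
  fun_prop

lemma integral_exp_I_mul_re_inner_map_smul [MeasurableSpace H] [BorelSpace H]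
    (μ : Measure H) (c : ℝ) (ψ : H) :
    ∫ φ, Complex.exp (Complex.I * ((inner ℂ ψ φ : ℂ).re : ℂ)) ∂(μ.map (c • ·))
      = ∫ φ, Complex.exp (Complex.I * ((inner ℂ (c • ψ) φ : ℂ).re : ℂ)) ∂μ := by
  rw [integral_map (continuous_const_smul c).aemeasurable
    (continuous_exp_I_mul_re_inner ψ).aestronglyMeasurable]
  simp only [RCLike.real_smul_eq_coe_smul (K := ℂ), inner_smul_real_right, inner_smul_real_left]

end FourierTransform

lemma tendsto_exp_neg_norm_sq_half {H : Type*} [NormedAddCommGroup H] {α : Type*}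
    {l : Filter α} {f : α → H} {v : H} (hf : Tendsto f l (nhds v)) :
    Tendsto (fun a => ((Real.exp (-‖f a‖ ^ 2 / 2) : ℝ) : ℂ)) l
      (nhds ((Real.exp (-‖v‖ ^ 2 / 2) : ℝ) : ℂ)) :=
  ((by fun_prop : Continuous fun w : H => ((Real.exp (-‖w‖ ^ 2 / 2) : ℝ) : ℂ)).tendsto v).comp hf

theorem stmt_15_general {H : Type*} [NormedAddCommGroup H] [InnerProductSpace ℂ H]
    [MeasurableSpace H] [BorelSpace H]
    (S : ℝ → H →L[ℂ] H) (lam0 : ℝ)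
    (Eig0 : Submodule ℂ H) [CompleteSpace Eig0]
    (hstrong : ∀ ψ : H,
      Tendsto (fun t : ℝ => Real.exp (t * lam0) • S t ψ) atTop
        (nhds ((Submodule.orthogonalProjection Eig0 ψ : Eig0) : H)))
    (μ : ℝ → Measure H)
    (hμ : ∀ t : ℝ, 0 < t → ∀ ψ : H,
      ∫ φ, Complex.exp (Complex.I * ((inner ℂ ψ φ : ℂ).re : ℂ)) ∂(μ t)
        = Real.exp (-‖S t ψ‖ ^ 2 / 2)) :
    ∀ ψ : H,
      Tendsto
        (fun t : ℝ =>
          ∫ φ, Complex.exp (Complex.I * ((inner ℂ ψ φ : ℂ).re : ℂ))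
            ∂(Measure.map (fun x : H => Real.exp (t * lam0) • x) (μ t)))
        atTop
        (nhds ((Real.exp (-‖((Submodule.orthogonalProjection Eig0 ψ : Eig0) : H)‖ ^ 2 / 2) : ℝ) : ℂ)) := by
  intro ψ
  refine (tendsto_exp_neg_norm_sq_half (hstrong ψ)).congr' ?_
  filter_upwards [eventually_gt_atTop 0] with t ht
  rw [integral_exp_I_mul_re_inner_map_smul, hμ t ht, (S t).map_smul_of_tower]

/-- let `Δ ≥ 0` be self-adjoint with discrete spectrum and lowest
eigenvalue `λ₀` on a separable Hilbert space `H`, `S_t` its heat semigroup with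
`e^{tλ₀}S_t → π₀` strongly (`π₀` the orthogonal projection onto the
`λ₀`-eigenspace `Eig₀`), and `μ_t` the Gaussian measure with Fourier transform
`ψ ↦ exp(-½‖S_tψ‖²)`.  With `A_t(ψ) = e^{tλ₀}ψ` and `μ̃_t = (A_t)_*μ_t`, the
Fourier transforms of `μ̃_t` converge pointwise as `t → ∞` to
`ψ ↦ exp(-½‖π₀ψ‖²)`, the Fourier transform of the standard Gaussian on `Eig₀`
pushed forward to `H`. -/
theorem stmt_15 {H : Type*} [NormedAddCommGroup H] [InnerProductSpace ℂ H]
    [CompleteSpace H] [SecondCountableTopology H] [MeasurableSpace H] [BorelSpace H]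
    (S : ℝ → H →L[ℂ] H) (lam0 : ℝ) (h0 : 0 ≤ lam0)
    (Eig0 : Submodule ℂ H) [CompleteSpace Eig0]
    (hstrong : ∀ ψ : H,
      Tendsto (fun t : ℝ => Real.exp (t * lam0) • S t ψ) atTop
        (nhds ((Submodule.orthogonalProjection Eig0 ψ : Eig0) : H)))
    (μ : ℝ → Measure H) (hprob : ∀ t : ℝ, 0 < t → IsProbabilityMeasure (μ t))
    (hμ : ∀ t : ℝ, 0 < t → ∀ ψ : H,
      ∫ φ, Complex.exp (Complex.I * ((inner ℂ ψ φ : ℂ).re : ℂ)) ∂(μ t)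
        = Real.exp (-‖S t ψ‖ ^ 2 / 2)) :
    ∀ ψ : H,
      Tendsto
        (fun t : ℝ =>
          ∫ φ, Complex.exp (Complex.I * ((inner ℂ ψ φ : ℂ).re : ℂ))
            ∂(Measure.map (fun x : H => Real.exp (t * lam0) • x) (μ t)))
        atTop
        (nhds ((Real.exp (-‖((Submodule.orthogonalProjection Eig0 ψ : Eig0) : H)‖ ^ 2 / 2) : ℝ) : ℂ)) :=
  stmt_15_general S lam0 Eig0 hstrong μ hμ
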